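/- arXiv:1108.3021 — 10 statements merged into one kernel-verified Lean document; each statement's English description precedes it below -/
import Mathlib

section
/- Let p : X → Y, q : Y → Z be surjective continuous maps and r = q ∘ p. If any two of p, q, r are local homeomorphisms, then so is the third. -/
theorem IsLocalHomeomorph.of_comp_of_surjective {X Y Z : Type*} [TopologicalSpace X]
    [TopologicalSpace Y] [TopologicalSpace Z] {g : Y → Z} {f : X → Y}
    (hgf : IsLocalHomeomorph (g ∘ f)) (hf : IsLocalHomeomorph f) (hsurj : Function.Surjective f) :
    IsLocalHomeomorph g := by
  have hg : IsLocalHomeomorphOn g (f '' Set.univ) :=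
    hgf.isLocalHomeomorphOn.of_comp_right hf.isLocalHomeomorphOn
  rwa [Set.image_univ, hsurj.range_eq, ← isLocalHomeomorph_iff_isLocalHomeomorphOn_univ] at hg

theorem two_of_three_isLocalHomeomorph_general {X Y Z : Type*} [TopologicalSpace X] [TopologicalSpace Y]
    [TopologicalSpace Z] (p : X → Y) (q : Y → Z)
    (hpc : Continuous p)
    (hps : Function.Surjective p) :
    (IsLocalHomeomorph p → IsLocalHomeomorph q → IsLocalHomeomorph (q ∘ p)) ∧
    (IsLocalHomeomorph q → IsLocalHomeomorph (q ∘ p) → IsLocalHomeomorph p) ∧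
    (IsLocalHomeomorph p → IsLocalHomeomorph (q ∘ p) → IsLocalHomeomorph q) :=
  ⟨fun hp hq => hq.comp hp, fun hq hr => hr.of_comp hq hpc,
    fun hp hr => hr.of_comp_of_surjective hp hps⟩

/-- Two-out-of-three for local homeomorphisms: if `p : X → Y` and `q : Y → Z` are surjective
continuous maps and `r = q ∘ p`, then whenever two of `p, q, r` are local homeomorphisms,
so is the third. -/
theorem two_of_three_isLocalHomeomorph {X Y Z : Type*} [TopologicalSpace X] [TopologicalSpace Y]
    [TopologicalSpace Z] (p : X → Y) (q : Y → Z)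
    (hpc : Continuous p) (hqc : Continuous q)
    (hps : Function.Surjective p) (hqs : Function.Surjective q) :
    (IsLocalHomeomorph p → IsLocalHomeomorph q → IsLocalHomeomorph (q ∘ p)) ∧
    (IsLocalHomeomorph q → IsLocalHomeomorph (q ∘ p) → IsLocalHomeomorph p) ∧
    (IsLocalHomeomorph p → IsLocalHomeomorph (q ∘ p) → IsLocalHomeomorph q) :=
  two_of_three_isLocalHomeomorph_general p q hpc hps
end

section
/- For a pointed topological space (X, x₀), the topology of π₁^τ(X, x₀) is the finest group topology on the fundamental group π₁(X, x₀) such that the canonical map h : Ω(X, x₀) → π₁(X, x₀) sending a loop to its homotopy class is continuous. That is, if π₁(X, x₀) is given any topology making it a topological group such that h is continuous, then the identity map π₁^τ(X, x₀) → π₁(X, x₀) is continuous. -/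
attribute [local instance] Path.Homotopic.setoid

/-- The canonical map `h : Ω(X,x₀) → π₁(X,x₀)` sending a loop to its homotopy class. -/
noncomputable def loopClassMap (X : TopCat) (x₀ : X) : Path x₀ x₀ → FundamentalGroup X x₀ :=
  fun γ => FundamentalGroup.fromPath ⟦γ⟧

/-- The quasitopological (quotient) topology on `π₁(X,x₀)` induced by `h`. -/
noncomputable def qtopTopology (X : TopCat) (x₀ : X) :
    TopologicalSpace (FundamentalGroup X x₀) :=
  TopologicalSpace.coinduced (loopClassMap X x₀) inferInstance

/-- The topology of `π₁^τ(X,x₀)`: the quotient topology with respect to the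
multiplication-of-letters map from the free Markov topological group on `π₁^{qtop}(X,x₀)`. -/
noncomputable def tauPiTopology (X : TopCat) (x₀ : X) :
    TopologicalSpace (FundamentalGroup X x₀) :=
  TopologicalSpace.coinduced
    (⇑(FreeGroup.lift (id : FundamentalGroup X x₀ → FundamentalGroup X x₀) :
        FreeGroup (FundamentalGroup X x₀) →* FundamentalGroup X x₀))
    (@GroupTopology.coinduced (FundamentalGroup X x₀) (FreeGroup (FundamentalGroup X x₀))
      (qtopTopology X x₀) _ FreeGroup.of).toTopologicalSpace

/-!
The free topological group on `π₁^{qtop}` is the coinduced group topology along `FreeGroup.of`,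
so it has the universal property of a coinduced group topology: a homomorphism out of it into a
topological group is continuous as soon as its composite with `FreeGroup.of` is. Pulling back
the group topology `t` along `FreeGroup.lift id` gives a group topology on the free group in which
`FreeGroup.of` is continuous (because `h` is), so the multiplication-of-letters map is continuous
into `t`, and `π₁^τ`, being its quotient topology, is finer than `t`.
-/

open scoped Topology

namespace GroupTopology

theorem coinduced_le_of_continuous {α β : Type*} [t : TopologicalSpace α] [Group β]
    {f : α → β} {b : GroupTopology β} (hf : Continuous[t, b.toTopologicalSpace] f) :
    coinduced f ≤ b :=
  sInf_le hf.coinduced_le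

def induced {H G : Type*} [Group H] [Group G] (φ : H →* G) (t : GroupTopology G) :
    GroupTopology H :=
  letI := t.toTopologicalSpace
  haveI := t.toIsTopologicalGroup
  { toTopologicalSpace := TopologicalSpace.induced φ t.toTopologicalSpace
    toIsTopologicalGroup := topologicalGroup_induced φ }

theorem continuous_of_continuous_comp_coinduced {α H G : Type*} [TopologicalSpace α] [Group H]
    [Group G] {f : α → H} {t : GroupTopology G} (φ : H →* G)
    (h : Continuous[_, t.toTopologicalSpace] (φ ∘ f)) :
    Continuous[(coinduced f).toTopologicalSpace, t.toTopologicalSpace] φ := by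
  have hf : Continuous[_, (induced φ t).toTopologicalSpace] f := continuous_induced_rng.2 h
  exact continuous_iff_le_induced.2 (toTopologicalSpace_le.2 (coinduced_le_of_continuous hf))

end GroupTopology

/-- `π₁^τ(X,x₀)` carries the finest group topology making `h : Ω(X,x₀) → π₁(X,x₀)` continuous:
for any group topology `t` on `π₁(X,x₀)` for which `h` is continuous, the identity
`π₁^τ(X,x₀) → (π₁(X,x₀), t)` is continuous. -/
theorem tauPiTopology_finest (X : TopCat) (x₀ : X)
    (t : GroupTopology (FundamentalGroup X x₀))
    (ht : @Continuous _ _ _ t.toTopologicalSpace (loopClassMap X x₀)) :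
    tauPiTopology X x₀ ≤ t.toTopologicalSpace := by
  let _ := qtopTopology X x₀
  have hq : Continuous[qtopTopology X x₀, t.toTopologicalSpace] id :=
    continuous_id_of_le ht.coinduced_le
  have hlift_of : ⇑(FreeGroup.lift id) ∘ FreeGroup.of = (id : FundamentalGroup X x₀ → _) :=
    funext fun _ => FreeGroup.lift_apply_of
  exact continuous_iff_coinduced_le.1 <|
    GroupTopology.continuous_of_continuous_comp_coinduced (FreeGroup.lift id) (by rwa [hlift_of])
end

section
/- Every covering map is a semicovering map. That is, if p : Y → X is a covering map then p is a local homeomorphism and for every y ∈ Y the induced map 𝒫p : (𝒫Y)_y → (𝒫X)_{p(y)} on spaces of paths starting at a point, with the compact-open topology, is a homeomorphism. -/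
open unitInterval

variable {X Y : Type*} [TopologicalSpace X] [TopologicalSpace Y]

/-- The space of paths in `X` starting at `x`, with the compact-open topology. -/
abbrev PathsFrom (X : Type*) [TopologicalSpace X] (x : X) : Type _ :=
  {α : C(I, X) // α 0 = x}

/-- Postcomposition `𝒫p : (𝒫Y)_y → (𝒫X)_{p(y)}`. -/
def pathPost (p : C(Y, X)) (y : Y) (α : PathsFrom Y y) : PathsFrom X (p y) :=
  ⟨p.comp α.1, by simp [α.2]⟩

/-- The space of homotopies of paths starting at `x` (the initial-endpoint edge is fixed at `x`),
with the compact-open topology. -/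
abbrev HtpysFrom (X : Type*) [TopologicalSpace X] (x : X) : Type _ :=
  {φ : C(I × I, X) // ∀ s, φ (s, 0) = x}

/-- Postcomposition `Φp : (ΦY)_y → (ΦX)_{p(y)}`. -/
def htpyPost (p : C(Y, X)) (y : Y) (φ : HtpysFrom Y y) : HtpysFrom X (p y) :=
  ⟨p.comp φ.1, by simp [φ.2]⟩

/-- A semicovering map: a local homeomorphism with continuous lifting of paths and homotopies. -/
structure IsSemicoveringMap (p : C(Y, X)) : Prop where
  isLocalHomeomorph : IsLocalHomeomorph p
  pathLifting : ∀ y : Y, IsHomeomorph (pathPost p y)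
  htpyLifting : ∀ y : Y, IsHomeomorph (htpyPost p y)

/-!
Unique path lifting makes `𝒫p` a bijection, inverted by lifting each path from `y`. That inverse
is continuous because the lifts of all paths at once are the lift of the evaluation family
`(t, γ) ↦ γ t` over the path space, which is continuous by the homotopy lifting property.
-/

theorem continuous_pathPost (p : C(Y, X)) (y : Y) : Continuous (pathPost p y) :=
  ((ContinuousMap.continuous_postcomp p).comp continuous_subtype_val).subtype_mk _

def PathsFrom.evalHomotopy (X : Type*) [TopologicalSpace X] (x : X) : C(I × PathsFrom X x, X) :=
  ⟨fun q => q.2.1 q.1, by fun_prop⟩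

namespace IsCoveringMap

variable {p : Y → X}

noncomputable def liftPathsFrom (hp : IsCoveringMap p) (y : Y) (γ : PathsFrom X (p y)) :
    PathsFrom Y y :=
  ⟨hp.liftPath γ.1 y γ.2, hp.liftPath_zero ..⟩

theorem pathPost_liftPathsFrom (hp : IsCoveringMap p) (y : Y) (γ : PathsFrom X (p y)) :
    pathPost ⟨p, hp.continuous⟩ y (hp.liftPathsFrom y γ) = γ :=
  Subtype.ext (ContinuousMap.ext (congrFun (hp.liftPath_lifts γ.1 y γ.2)))

theorem liftPathsFrom_pathPost (hp : IsCoveringMap p) (y : Y) (α : PathsFrom Y y) :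
    hp.liftPathsFrom y (pathPost ⟨p, hp.continuous⟩ y α) = α :=
  Subtype.ext ((hp.eq_liftPath_iff' (pathPost ⟨p, hp.continuous⟩ y α).2).2 ⟨rfl, α.2⟩).symm

theorem continuous_liftPathsFrom (hp : IsCoveringMap p) (y : Y) :
    Continuous (hp.liftPathsFrom y) := by
  have h0 : ∀ γ : PathsFrom X (p y), PathsFrom.evalHomotopy X (p y) (0, γ) = p y := fun γ => γ.2
  set L := hp.liftHomotopy _ (.const _ y) h0
  have hL : ∀ γ, (L.comp .prodSwap).curry γ = (hp.liftPathsFrom y γ).1 := fun γ =>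
    (hp.eq_liftPath_iff' γ.2).2 ⟨funext fun t => congrFun (hp.liftHomotopy_lifts _ _ h0) (t, γ),
      hp.liftHomotopy_zero _ _ h0 γ⟩
  exact ((L.comp .prodSwap).curry.continuous.subtype_mk (hp.liftHomotopy_zero _ _ h0)).congr
    fun γ => Subtype.ext (hL γ)

noncomputable def pathsFromHomeomorph (hp : IsCoveringMap p) (y : Y) :
    PathsFrom Y y ≃ₜ PathsFrom X (p y) where
  toFun := pathPost ⟨p, hp.continuous⟩ y
  invFun := hp.liftPathsFrom y
  left_inv := hp.liftPathsFrom_pathPost y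
  right_inv := hp.pathPost_liftPathsFrom y
  continuous_toFun := continuous_pathPost _ y
  continuous_invFun := hp.continuous_liftPathsFrom y

end IsCoveringMap

/-- Every covering map is a semicovering map: it is a local homeomorphism and
postcomposition induces homeomorphisms of based path spaces. -/
theorem isCoveringMap_isSemicovering {X E : Type*} [TopologicalSpace X] [TopologicalSpace E]
    (f : E → X) (hf : IsCoveringMap f) :
    IsLocalHomeomorph f ∧
      ∀ e : E, IsHomeomorph (pathPost ⟨f, hf.continuous⟩ e) :=
  ⟨hf.isLocalHomeomorph, fun e => (hf.pathsFromHomeomorph e).isHomeomorph⟩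
end

section
/- If p : Y → X is a semicovering map, f : W → X is any continuous map, and W ×_X Y = {(w, y) | f(w) = p(y)} is the pullback with the subspace topology of the product, then the projection f*p : W ×_X Y → W is a semicovering map. -/
/-!
A map `γ : K → W ×_X Y` is the same as a pair `(α, β)` with `f ∘ α = p ∘ β`. If
postcomposition with `p` is a homeomorphism on based maps `K → Y`, then `β = p_*⁻¹ (f ∘ α)`
is forced and depends continuously on `α`, so postcomposition with the projection
`W ×_X Y → W` is a homeomorphism too; this is applied with `K = I` (paths) and `K = I × I`
(homotopies). Locally, over the source of a chart `e` of `p`, the pullback is identified with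
the open set `f ⁻¹' e.target` of `W` via `w ↦ (w, e⁻¹ (f w))`.
-/

open unitInterval

variable {X Y : Type*} [TopologicalSpace X] [TopologicalSpace Y]

section

open Function.Pullback

variable {K W : Type*} [TopologicalSpace K] [TopologicalSpace W]

def OpenPartialHomeomorph.pullbackHomeomorph (e : OpenPartialHomeomorph Y X) {f : W → X}
    (hf : Continuous f) : {z : f.Pullback e // z.snd ∈ e.source} ≃ₜ f ⁻¹' e.target where
  toFun z := ⟨z.1.fst, by
    change f z.1.1.1 ∈ e.target
    rw [z.1.2]
    exact e.map_source z.2⟩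
  invFun w := ⟨⟨(w.1, e.symm (f w.1)), (e.right_inv w.2).symm⟩, e.map_target w.2⟩
  left_inv z := by
    have hz : f z.1.1.1 = e z.1.1.2 := z.1.2
    ext
    · rfl
    · change e.symm (f z.1.1.1) = z.1.1.2
      rw [hz]
      exact e.left_inv z.2
  right_inv w := rfl
  continuous_toFun := by
    refine Continuous.subtype_mk ?_ _
    exact continuous_fst.comp (continuous_subtype_val.comp continuous_subtype_val)
  continuous_invFun := by
    refine Continuous.subtype_mk (Continuous.subtype_mk (continuous_subtype_val.prodMk ?_) _) _
    exact e.continuousOn_symm.comp_continuous (hf.comp continuous_subtype_val) fun w => w.2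

theorem IsLocalHomeomorph.pullback_fst {f : W → X} {p : Y → X} (hf : Continuous f)
    (hp : IsLocalHomeomorph p) : IsLocalHomeomorph (fst : Function.Pullback f p → W) := by
  rw [isLocalHomeomorph_iff_isOpenEmbedding_restrict]
  intro z
  obtain ⟨e, hz, rfl⟩ := hp z.snd
  have hsource : IsOpen {z : f.Pullback e | z.snd ∈ e.source} :=
    e.open_source.preimage (continuous_snd.comp continuous_subtype_val)
  refine ⟨_, hsource.mem_nhds hz, ?_⟩
  exact (e.open_target.preimage hf).isOpenEmbedding_subtypeVal.comp
    (e.pullbackHomeomorph hf).isOpenEmbedding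

namespace ContinuousMap

variable (f : C(W, X)) (p : C(Y, X))

@[simps]
def pullbackFst : C(Function.Pullback f p, W) :=
  ⟨fun z => z.1.1, continuous_fst.comp continuous_subtype_val⟩

@[simps]
def pullbackSnd : C(Function.Pullback f p, Y) :=
  ⟨fun z => z.1.2, continuous_snd.comp continuous_subtype_val⟩

variable {f p}

def pullbackMk (α : C(K, W)) (β : C(K, Y)) (h : f.comp α = p.comp β) :
    C(K, Function.Pullback f p) :=
  ⟨fun k => ⟨(α k, β k), congr($h k)⟩, by fun_prop⟩

theorem continuous_pullbackMk [LocallyCompactSpace K] {T : Type*} [TopologicalSpace T]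
    {α : T → C(K, W)} {β : T → C(K, Y)} (hα : Continuous α) (hβ : Continuous β)
    (h : ∀ t, f.comp (α t) = p.comp (β t)) :
    Continuous fun t => pullbackMk (α t) (β t) (h t) :=
  continuous_of_continuous_uncurry _ <|
    ((hα.comp continuous_fst).eval continuous_snd).prodMk
      ((hβ.comp continuous_fst).eval continuous_snd) |>.subtype_mk _

theorem pullbackMk_fst_snd (γ : C(K, Function.Pullback f p)) :
    pullbackMk ((pullbackFst f p).comp γ) ((pullbackSnd f p).comp γ)
      (by ext k; exact (γ k).2) = γ :=
  rfl

end ContinuousMap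

open ContinuousMap

/-- The conditions `PY`, `PX`, `PW`, `PZ` are basepoint conditions, such as `α 0 = x` for paths
(`K = I`) or `∀ s, φ (s, 0) = x` for homotopies (`K = I × I`). -/
theorem isHomeomorph_pullbackFst_postcomp [LocallyCompactSpace K] {f : C(W, X)} {p : C(Y, X)}
    {PY : C(K, Y) → Prop} {PX : C(K, X) → Prop} {PW : C(K, W) → Prop}
    {PZ : C(K, Function.Pullback f p) → Prop} (hPX : ∀ β, PY β → PX (p.comp β))
    (hPW : ∀ α, PW α → PX (f.comp α))
    (hPZ : ∀ γ, PZ γ ↔ PW ((pullbackFst f p).comp γ) ∧ PY ((pullbackSnd f p).comp γ))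
    (hp : IsHomeomorph fun β : Subtype PY => (⟨p.comp β, hPX β β.2⟩ : Subtype PX)) :
    IsHomeomorph fun γ : Subtype PZ =>
      (⟨(pullbackFst f p).comp γ, ((hPZ γ).1 γ.2).1⟩ : Subtype PW) := by
  set e := hp.homeomorph
  set lift : Subtype PW → Subtype PY := fun α => e.symm ⟨f.comp α, hPW α α.2⟩
  have hlift : ∀ α, f.comp α.1 = p.comp (lift α).1 := fun α =>
    (congrArg Subtype.val (e.apply_symm_apply ⟨f.comp α, hPW α α.2⟩)).symm
  have hlift_snd : ∀ γ : Subtype PZ, lift ⟨(pullbackFst f p).comp γ, ((hPZ γ).1 γ.2).1⟩ =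
      ⟨(pullbackSnd f p).comp γ, ((hPZ γ).1 γ.2).2⟩ := fun γ =>
    e.symm_apply_eq.mpr (Subtype.ext (ContinuousMap.ext fun k => (γ.1 k).2))
  rw [isHomeomorph_iff_exists_inverse]
  refine ⟨?_, fun α => ⟨pullbackMk α.1 (lift α).1 (hlift α), (hPZ _).2 ⟨α.2, (lift α).2⟩⟩,
      fun γ => ?_, fun α => rfl, ?_⟩
  · exact ((continuous_postcomp _).comp continuous_subtype_val).subtype_mk _
  · simp only [hlift_snd]
    exact Subtype.ext (pullbackMk_fst_snd γ.1)
  · refine Continuous.subtype_mk (continuous_pullbackMk continuous_subtype_val ?_ _) _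
    exact continuous_subtype_val.comp <| e.symm.continuous.comp <|
      ((continuous_postcomp f).comp continuous_subtype_val).subtype_mk _

end

/-- The pullback of a semicovering `p : Y → X` along any map `f : W → X` is a
semicovering of `W`. -/
theorem semicovering_pullback {X Y W : Type*} [TopologicalSpace X] [TopologicalSpace Y]
    [TopologicalSpace W] (p : C(Y, X)) (hp : IsSemicoveringMap p) (f : C(W, X)) :
    IsSemicoveringMap
      (⟨fun wy : {wy : W × Y // f wy.1 = p wy.2} => wy.1.1,
        continuous_fst.comp continuous_subtype_val⟩ :
        C({wy : W × Y // f wy.1 = p wy.2}, W)) := by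
  refine ⟨hp.isLocalHomeomorph.pullback_fst f.continuous, fun z => ?_, fun z => ?_⟩
  · refine isHomeomorph_pullbackFst_postcomp (f := f) (fun β hβ => ?_) (fun α hα => ?_)
      (fun γ => ?_) (hp.pathLifting z.1.2)
    · simp [hβ]
    · simp [hα, z.2]
    · simp [Subtype.ext_iff, Prod.ext_iff]
  · refine isHomeomorph_pullbackFst_postcomp (f := f) (fun β hβ => ?_) (fun α hα => ?_)
      (fun γ => ?_) (hp.htpyLifting z.1.2)
    · simp [hβ]
    · simp [hα, z.2]
    · simp [Subtype.ext_iff, Prod.ext_iff, forall_and]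
end

section
/- If p : Y → X is a semicovering map with p(y₁) = x₁ and p(y₂) = x₂, then the induced map 𝒫p : 𝒫Y(y₁, y₂) → 𝒫X(x₁, x₂) on spaces of paths with prescribed endpoints (compact-open topology) is an open topological embedding. -/
open Topology

open unitInterval

variable {X Y : Type*} [TopologicalSpace X] [TopologicalSpace Y]

/-- The space of paths in `X` from `x₁` to `x₂`, with the compact-open topology. -/
abbrev PathsBetween (X : Type*) [TopologicalSpace X] (x₁ x₂ : X) : Type _ :=
  {α : C(I, X) // α 0 = x₁ ∧ α 1 = x₂}

/-! The map `𝒫p` on paths between fixed endpoints is the restriction of the homeomorphism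
`pathPost p y₁`, hence an embedding. A path from `p y₁` to `p y₂` is in its image iff its lift
from `y₁` ends at `y₂`; as `p` is injective on a neighbourhood `U` of `y₂` and the lift ends over
`p y₂`, this says that the lift ends in `U`, an open condition because lifting is continuous. -/

def pathsBetweenPost (p : C(Y, X)) (y₁ y₂ : Y) (α : PathsBetween Y y₁ y₂) :
    PathsBetween X (p y₁) (p y₂) :=
  ⟨p.comp α.1, by simp [α.2.1], by simp [α.2.2]⟩

namespace PathsBetween

def toPathsFrom {x₁ x₂ : X} (α : PathsBetween X x₁ x₂) : PathsFrom X x₁ := ⟨α.1, α.2.1⟩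

theorem isEmbedding_toPathsFrom (x₁ x₂ : X) :
    IsEmbedding (toPathsFrom : PathsBetween X x₁ x₂ → PathsFrom X x₁) :=
  .of_comp (by unfold toPathsFrom; fun_prop) continuous_subtype_val .subtypeVal

theorem pathPost_comp_toPathsFrom (p : C(Y, X)) (y₁ y₂ : Y) :
    pathPost p y₁ ∘ toPathsFrom = toPathsFrom ∘ pathsBetweenPost p y₁ y₂ :=
  rfl

end PathsBetween

open PathsBetween

theorem continuous_pathsBetweenPost (p : C(Y, X)) (y₁ y₂ : Y) :
    Continuous (pathsBetweenPost p y₁ y₂) :=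
  (ContinuousMap.continuous_postcomp p |>.comp continuous_subtype_val).subtype_mk _

theorem isEmbedding_pathsBetweenPost {p : C(Y, X)} {y₁ : Y} (hp : IsEmbedding (pathPost p y₁))
    (y₂ : Y) : IsEmbedding (pathsBetweenPost p y₁ y₂) := by
  refine .of_comp (continuous_pathsBetweenPost p y₁ y₂) (isEmbedding_toPathsFrom _ _).continuous ?_
  rw [← pathPost_comp_toPathsFrom]
  exact hp.comp (isEmbedding_toPathsFrom y₁ y₂)

theorem range_pathsBetweenPost {p : C(Y, X)} {y₁ : Y} (hp : IsHomeomorph (pathPost p y₁))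
    {y₂ : Y} {U : Set Y} (hy₂ : y₂ ∈ U) (hU : U.InjOn p) :
    Set.range (pathsBetweenPost p y₁ y₂) =
      {β | (hp.homeomorph.symm β.toPathsFrom).1 1 ∈ U} := by
  set e := hp.homeomorph
  ext β
  constructor
  · rintro ⟨α, rfl⟩
    change (e.symm (e α.toPathsFrom)).1 1 ∈ U
    rw [e.symm_apply_apply]
    exact α.2.2.symm ▸ hy₂
  · intro hβ
    set γ := e.symm β.toPathsFrom
    have hγ : p.comp γ.1 = β.1 := congrArg Subtype.val (e.apply_symm_apply β.toPathsFrom)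
    have hend : γ.1 1 = y₂ := hU hβ hy₂ <| by
      rw [← ContinuousMap.comp_apply, hγ, β.2.2]
    exact ⟨⟨γ.1, γ.2, hend⟩, Subtype.ext hγ⟩

theorem isOpen_range_pathsBetweenPost {p : C(Y, X)} {y₁ : Y} (hp : IsHomeomorph (pathPost p y₁))
    {y₂ : Y} (hinj : IsLocallyInjective p) : IsOpen (Set.range (pathsBetweenPost p y₁ y₂)) := by
  obtain ⟨U, hUo, hy₂, hU⟩ := hinj y₂
  rw [range_pathsBetweenPost hp hy₂ hU]
  exact hUo.preimage <| (continuous_eval_const 1).comp <| continuous_subtype_val.comp <|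
    hp.homeomorph.symm.continuous.comp (isEmbedding_toPathsFrom _ _).continuous

/-- If `p : Y → X` is a semicovering with `p y₁ = x₁`, `p y₂ = x₂`, the induced map
`𝒫Y(y₁,y₂) → 𝒫X(x₁,x₂)` is an open topological embedding. -/
theorem semicovering_pathsBetween_isOpenEmbedding {X Y : Type*} [TopologicalSpace X]
    [TopologicalSpace Y] (p : C(Y, X)) (hp : IsSemicoveringMap p) (y₁ y₂ : Y) :
    IsOpenEmbedding (fun α : PathsBetween Y y₁ y₂ =>
      (⟨p.comp α.1, by simp [α.2.1], by simp [α.2.2]⟩ : PathsBetween X (p y₁) (p y₂))) :=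
  ⟨isEmbedding_pathsBetweenPost (hp.pathLifting y₁).isEmbedding y₂,
    isOpen_range_pathsBetweenPost (hp.pathLifting y₁) hp.isLocalHomeomorph.isLocallyInjective⟩
end

section
/- Let p : Y → X be a map with continuous lifting of paths and homotopies. Then: (a) p induces a covering morphism of fundamental groupoids πp : πY → πX (i.e., for each y ∈ Y the map from homotopy classes of paths in Y starting at y to homotopy classes of paths in X starting at p(y) is a bijection); and (b) for p(y₁) = x₁, p(y₂) = x₂ and a path β from x₁ to x₂, the class [β] lies in the image of πp : πY(y₁,y₂) → πX(x₁,x₂) if and only if the unique lift of β starting at y₁ ends at y₂. -/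
open Topology

open unitInterval

variable {X Y : Type*} [TopologicalSpace X] [TopologicalSpace Y]

attribute [local instance] Path.Homotopic.setoid


/-! Lift a homotopy `F` rel endpoints between paths from `p y` to a map `G : I × I → Y` with
bottom edge at `y`. By uniqueness of path lifts, the sides of `G` are the lifts of the two paths,
and its top edge, a lift of a constant path, is constant. Hence lifts of homotopic paths end at
the same point and are homotopic rel endpoints: this is injectivity of `πp` on stars and the
forward direction of (b). Surjectivity and the converse of (b) only need the lift of one path. -/

/-- `πp` on the star of `y`: classes of paths from `y`, to classes of paths from `p y`. -/
def starMap (p : C(Y, X)) (y : Y) :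
    (Σ y₂ : Y, Path.Homotopic.Quotient y y₂) → Σ x₂ : X, Path.Homotopic.Quotient (p y) x₂ :=
  fun z => ⟨p z.1, z.2.map p⟩

section Lifting

variable {p : C(Y, X)}

theorem exists_lift_of_surjective_pathPost {y : Y} (hlift : Function.Surjective (pathPost p y))
    (f : C(I, X)) (hf : f 0 = p y) : ∃ γ : C(I, Y), γ 0 = y ∧ p.comp γ = f := by
  obtain ⟨⟨γ, hγ⟩, h⟩ := hlift ⟨f, hf⟩
  exact ⟨γ, hγ, congrArg Subtype.val h⟩

theorem lift_unique_of_injective_pathPost {y : Y} (hunique : Function.Injective (pathPost p y))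
    {γ₀ γ₁ : C(I, Y)} (h₀ : γ₀ 0 = y) (h₁ : γ₁ 0 = y) (h : p.comp γ₀ = p.comp γ₁) : γ₀ = γ₁ :=
  congrArg Subtype.val (hunique (a₁ := ⟨γ₀, h₀⟩) (a₂ := ⟨γ₁, h₁⟩) (Subtype.ext h))

theorem exists_lift_of_surjective_htpyPost {y : Y}
    (hliftHtpy : Function.Surjective (htpyPost p y)) (H : C(I × I, X))
    (hH : ∀ s, H (s, 0) = p y) : ∃ G : C(I × I, Y), (∀ s, G (s, 0) = y) ∧ p.comp G = H := by
  obtain ⟨⟨G, hG⟩, h⟩ := hliftHtpy ⟨H, hH⟩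
  exact ⟨G, hG, congrArg Subtype.val h⟩

theorem homotopicRel_of_homotopic_comp (hunique : ∀ y, Function.Injective (pathPost p y))
    {y : Y} (hliftHtpy : Function.Surjective (htpyPost p y)) {x : X} {f₀ f₁ : Path (p y) x}
    (hf : f₀.Homotopic f₁) {γ₀ γ₁ : C(I, Y)} (h₀ : γ₀ 0 = y) (h₁ : γ₁ 0 = y)
    (hγ₀ : p.comp γ₀ = f₀) (hγ₁ : p.comp γ₁ = f₁) : γ₀.HomotopicRel γ₁ {0, 1} := by
  obtain ⟨F⟩ := hf
  obtain ⟨G, hG₀, hGF⟩ := exists_lift_of_surjective_htpyPost hliftHtpy F F.source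
  have hpG : ∀ z, p (G z) = F z := DFunLike.congr_fun hGF
  have hcurry (s : I) : p.comp (G.curry s) = F.curry s := by
    ext t; simp [hpG]
  have hleft : G.curry 0 = γ₀ := lift_unique_of_injective_pathPost (hunique y) (hG₀ 0) h₀ <| by
    rw [hcurry, F.curry_zero, hγ₀]; rfl
  have hright : G.curry 1 = γ₁ := lift_unique_of_injective_pathPost (hunique y) (hG₀ 1) h₁ <| by
    rw [hcurry, F.curry_one, hγ₁]; rfl
  have hx : p (γ₀ 1) = x := by simpa using DFunLike.congr_fun hγ₀ 1
  have htop : (⟨fun s => G (s, 1), by fun_prop⟩ : C(I, Y)) = .const I (γ₀ 1) :=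
    lift_unique_of_injective_pathPost (hunique (γ₀ 1)) (by simp [← hleft]) rfl <| by
      ext s; simp [hpG, hx]
  refine ⟨⟨⟨G, fun t => by simp [← hleft], fun t => by simp [← hright]⟩, ?_⟩⟩
  rintro s t (rfl | rfl)
  · simp [hG₀, h₀]
  · exact DFunLike.congr_fun htop s

theorem map_mk_eq_of_comp_eq {y y' : Y} {β : Path (p y) (p y')} (γ : Path y y')
    (h : p.comp γ = β.toContinuousMap) : Path.Homotopic.Quotient.map ⟦γ⟧ p = ⟦β⟧ :=
  congrArg (⟦·⟧) (show γ.map p.continuous = β by ext t; exact DFunLike.congr_fun h t)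

theorem starMap_injective {y : Y} (hunique : ∀ y, Function.Injective (pathPost p y))
    (hliftHtpy : Function.Surjective (htpyPost p y)) : Function.Injective (starMap p y) := by
  rintro ⟨y₂, ⟨α⟩⟩ ⟨y₂', ⟨α'⟩⟩ h
  obtain ⟨hend, hmap⟩ := Sigma.mk.inj_iff.mp h
  have hα : (α.map p.continuous).Homotopic ((α'.map p.continuous).cast rfl hend) :=
    Quotient.exact (eq_of_heq (hmap.trans (Path.Homotopic.Quotient.cast_heq _ _).symm))
  have hrel := homotopicRel_of_homotopic_comp hunique hliftHtpy hα α.source α'.source rfl rfl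
  obtain rfl : y₂ = y₂' := by simpa using hrel.fst_eq_snd (x := 1) (by simp)
  exact Sigma.ext rfl (heq_of_eq (Quotient.sound hrel))

theorem starMap_surjective {y : Y} (hlift : Function.Surjective (pathPost p y)) :
    Function.Surjective (starMap p y) := by
  rintro ⟨x₂, ⟨β⟩⟩
  obtain ⟨γ, hγ₀, hγ⟩ := exists_lift_of_surjective_pathPost hlift β β.source
  obtain rfl : p (γ 1) = x₂ := by simpa using DFunLike.congr_fun hγ 1
  exact ⟨⟨γ 1, ⟦⟨γ, hγ₀, rfl⟩⟧⟩, Sigma.ext rfl (heq_of_eq (map_mk_eq_of_comp_eq _ hγ))⟩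

theorem exists_map_eq_iff_lift_apply_one {y₁ y₂ : Y}
    (hunique : ∀ y, Function.Injective (pathPost p y))
    (hlift : Function.Surjective (pathPost p y₁))
    (hliftHtpy : Function.Surjective (htpyPost p y₁)) (β : Path (p y₁) (p y₂)) :
    (∃ q : Path.Homotopic.Quotient y₁ y₂, q.map p = ⟦β⟧) ↔
      ∀ γ : C(I, Y), γ 0 = y₁ → p.comp γ = β.toContinuousMap → γ 1 = y₂ := by
  constructor
  · rintro ⟨⟨α⟩, hα⟩ γ hγ₀ hγ
    have hrel :=
      homotopicRel_of_homotopic_comp hunique hliftHtpy (Quotient.exact hα) α.source hγ₀ rfl hγ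
    simpa using (hrel.fst_eq_snd (x := 1) (by simp)).symm
  · intro h
    obtain ⟨γ, hγ₀, hγ⟩ := exists_lift_of_surjective_pathPost hlift β β.source
    exact ⟨⟦⟨γ, hγ₀, h γ hγ₀ hγ⟩⟧, map_mk_eq_of_comp_eq _ hγ⟩

end Lifting

/-- For a map `p` with continuous lifting of paths and homotopies:
(a) `p` induces a covering morphism of fundamental groupoids, i.e. for each `y ∈ Y` the induced
map on stars (homotopy classes of paths starting at `y`, resp. at `p y`) is a bijection; and
(b) for `p y₁ = x₁`, `p y₂ = x₂` and a path `β` from `x₁` to `x₂`, the class `[β]` lies in the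
image of `πp : πY(y₁,y₂) → πX(x₁,x₂)` iff every (hence the unique) lift of `β` starting at `y₁`
ends at `y₂`. -/
theorem continuous_lifting_covering_morphism {X Y : Type*} [TopologicalSpace X]
    [TopologicalSpace Y] (p : C(Y, X))
    (hpath : ∀ y : Y, IsHomeomorph (pathPost p y))
    (hhtpy : ∀ y : Y, IsHomeomorph (htpyPost p y)) :
    (∀ y : Y, Function.Bijective
      (fun z : Σ y₂ : Y, Path.Homotopic.Quotient y y₂ =>
        (⟨p z.1, Path.Homotopic.Quotient.map z.2 p⟩ : Σ x₂ : X, Path.Homotopic.Quotient (p y) x₂))) ∧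
    (∀ (y₁ y₂ : Y) (β : Path (p y₁) (p y₂)),
      ((∃ q : Path.Homotopic.Quotient y₁ y₂, Path.Homotopic.Quotient.map q p = ⟦β⟧) ↔
        (∀ γ : C(I, Y), γ 0 = y₁ → p.comp γ = β.toContinuousMap → γ 1 = y₂))) := by
  have hunique y := (hpath y).bijective.injective
  have hlift y := (hpath y).bijective.surjective
  have hliftHtpy y := (hhtpy y).bijective.surjective
  exact ⟨fun y => ⟨starMap_injective hunique (hliftHtpy y), starMap_surjective (hlift y)⟩,
    fun y₁ _ => exists_map_eq_iff_lift_apply_one hunique (hlift y₁) (hliftHtpy y₁)⟩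
end

section
/- Let X be a wep-connected space and x₀ ∈ X. Then the evaluation map ev₁ : (𝒫X)_{x₀} → X sending α to α(1) is a quotient map. -/
open unitInterval Topology

/-- A path `α` is well-targeted if every neighborhood `U` of `α` in the space of paths
starting at `α 0` admits an open neighborhood `V` of `α 1` each of whose points is the
endpoint of some path in `U`. -/
def IsWellTargeted {X : Type*} [TopologicalSpace X] (α : C(I, X)) : Prop :=
  ∀ U : Set {β : C(I, X) // β 0 = α 0}, IsOpen U →
    (⟨α, rfl⟩ : {β : C(I, X) // β 0 = α 0}) ∈ U →
    ∃ V : Set X, IsOpen V ∧ α 1 ∈ V ∧ ∀ b ∈ V, ∃ β ∈ U, β.1 1 = b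

/-- A path `α` is well-ended if every neighborhood `U` of `α` in `𝒫X` admits open
neighborhoods `V₀, V₁` of `α 0, α 1` such that every pair `(a, b) ∈ V₀ × V₁` is joined
by a path in `U`. -/
def IsWellEnded {X : Type*} [TopologicalSpace X] (α : C(I, X)) : Prop :=
  ∀ U : Set C(I, X), IsOpen U → α ∈ U →
    ∃ V₀ V₁ : Set X, IsOpen V₀ ∧ IsOpen V₁ ∧ α 0 ∈ V₀ ∧ α 1 ∈ V₁ ∧
      ∀ a ∈ V₀, ∀ b ∈ V₁, ∃ β ∈ U, β 0 = a ∧ β 1 = b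

/-- A space is wep-connected if every pair of its points is joined by a well-ended path. -/
def WepConnected (X : Type*) [TopologicalSpace X] : Prop :=
  ∀ x y : X, ∃ α : C(I, X), α 0 = x ∧ α 1 = y ∧ IsWellEnded α

open Filter

theorem Topology.IsQuotientMap.of_forall_exists_nhds_le_map {A B : Type*} [TopologicalSpace A]
    [TopologicalSpace B] {f : A → B} (hf : Continuous f)
    (hopen : ∀ b, ∃ a, f a = b ∧ 𝓝 b ≤ map f (𝓝 a)) : IsQuotientMap f := by
  refine ⟨isCoinducing_iff.mpr fun s ↦ ⟨fun hs ↦ ?_, fun hs ↦ hs.preimage hf⟩,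
    fun b ↦ (hopen b).imp fun _ ↦ And.left⟩
  refine isOpen_iff_mem_nhds.mpr fun b hb ↦ ?_
  obtain ⟨a, rfl, hle⟩ := hopen b
  exact hle (hs.mem_nhds hb)

theorem IsWellEnded.isWellTargeted {X : Type*} [TopologicalSpace X] {α : C(I, X)}
    (hα : IsWellEnded α) : IsWellTargeted α := by
  intro U hU hαU
  obtain ⟨W, hW, rfl⟩ := isOpen_induced_iff.mp hU
  obtain ⟨_, V₁, _, hV₁, hα0, hα1, hjoin⟩ := hα W hW hαU
  refine ⟨V₁, hV₁, hα1, fun b hb ↦ ?_⟩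
  obtain ⟨β, hβW, hβ0, rfl⟩ := hjoin (α 0) hα0 b hb
  exact ⟨⟨β, hβ0⟩, hβW, rfl⟩

theorem IsWellTargeted.nhds_le_map_eval_one {X : Type*} [TopologicalSpace X] {α : C(I, X)}
    (hα : IsWellTargeted α) :
    𝓝 (α 1) ≤ map (fun β : {β : C(I, X) // β 0 = α 0} ↦ β.1 1) (𝓝 ⟨α, rfl⟩) := by
  intro S hS
  obtain ⟨U, hUS, hU, hαU⟩ := mem_nhds_iff.mp hS
  obtain ⟨V, hV, hαV, hsurj⟩ := hα U hU hαU
  refine mem_of_superset (hV.mem_nhds hαV) fun b hb ↦ ?_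
  obtain ⟨β, hβU, rfl⟩ := hsurj b hb
  exact hUS hβU

/-- If `X` is wep-connected, evaluation at `1` from the space of paths starting at `x₀`
to `X` is a quotient map. -/
theorem wepConnected_ev1_isQuotientMap {X : Type*} [TopologicalSpace X]
    (hX : WepConnected X) (x₀ : X) :
    IsQuotientMap (fun α : {α : C(I, X) // α 0 = x₀} => α.1 1) := by
  refine .of_forall_exists_nhds_le_map (by fun_prop) fun y ↦ ?_
  obtain ⟨α, rfl, rfl, hα⟩ := hX x₀ y
  exact ⟨⟨α, rfl⟩, rfl, hα.isWellTargeted.nhds_le_map_eval_one⟩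
end

section
/- If a path α : I → X is continuous and the space X is locally path connected at both α(0) and α(1), then α is well-ended. -/
/-! A basic neighbourhood of `α` in the compact-open topology is cut out by finitely many
conditions `MapsTo β K O`. Run along short paths `p` into `α 0` and `q` out of `α 1` during
times `[0, ε]` and `[1 - ε, 1]`, and along `α`, linearly reparametrized, in between. Since `α`
maps a uniform thickening of `K` into `O`, each condition survives once `ε` is small and `p`,
`q` stay in small neighbourhoods of `α 0`, `α 1`: `K` meets `[0, ε]` only if its thickening
contains `0`, so that `α 0 ∈ O`. Local path connectedness provides such `p` and `q` starting
or ending at every point of a neighbourhood. -/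

open unitInterval Topology

/-- `X` is locally path connected at `x` if every open neighborhood of `x` contains a path
connected open neighborhood of `x`. -/
def LocallyPathConnectedAt {X : Type*} [TopologicalSpace X] (x : X) : Prop :=
  ∀ U : Set X, IsOpen U → x ∈ U →
    ∃ V : Set X, V ⊆ U ∧ IsOpen V ∧ x ∈ V ∧ IsPathConnected V

open Set Filter

section

variable {X : Type*} [TopologicalSpace X]

noncomputable def concatWithEnds (ε : ℝ) (p γ q : C(I, X)) (t : ℝ) : X :=
  if t ≤ ε then IccExtend zero_le_one p (t / ε)
  else if t ≤ 1 - ε then IccExtend zero_le_one γ ((t - ε) / (1 - 2 * ε))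
  else IccExtend zero_le_one q ((t - (1 - ε)) / ε)

section concatWithEnds

variable {ε : ℝ} (p γ q : C(I, X))

theorem continuous_concatWithEnds (hε : 0 < ε) (hε' : ε < 1 / 2) (hp : p 1 = γ 0)
    (hq : γ 1 = q 0) : Continuous (concatWithEnds ε p γ q) := by
  refine Continuous.if_le (by fun_prop) (Continuous.if_le (by fun_prop) (by fun_prop)
    continuous_id continuous_const ?_) continuous_id continuous_const ?_
  · rintro t rfl
    rw [(div_eq_one_iff_eq (by linarith)).2 (by ring), sub_self, zero_div,
      IccExtend_right, IccExtend_left]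
    exact hq
  · rintro t rfl
    rw [div_self hε.ne', if_pos (by linarith), sub_self, zero_div, IccExtend_right,
      IccExtend_left]
    exact hp

theorem concatWithEnds_zero (hε : 0 < ε) : concatWithEnds ε p γ q 0 = p 0 := by
  rw [concatWithEnds, if_pos hε.le, zero_div, IccExtend_left]
  rfl

theorem concatWithEnds_one (hε : 0 < ε) (hε' : ε < 1 / 2) : concatWithEnds ε p γ q 1 = q 1 := by
  rw [concatWithEnds, if_neg (by linarith), if_neg (by linarith),
    sub_sub_cancel, div_self hε.ne', IccExtend_right]
  rfl

theorem concatWithEnds_cases (hε : 0 < ε) (hε' : ε ≤ 1 / 4) (t : I) :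
    ((t : ℝ) ≤ ε ∧ concatWithEnds ε p γ q t ∈ range p) ∨
      (∃ s : I, dist s t ≤ 2 * ε ∧ concatWithEnds ε p γ q t = γ s) ∨
      (1 - ε < (t : ℝ) ∧ concatWithEnds ε p γ q t ∈ range q) := by
  unfold concatWithEnds
  split_ifs with h₀ h₁
  · exact .inl ⟨h₀, IccExtend_range _ p ▸ mem_range_self _⟩
  · have hpos : 0 < 1 - 2 * ε := by linarith
    have hs : (t - ε) / (1 - 2 * ε) ∈ I :=
      ⟨div_nonneg (by linarith) hpos.le, (div_le_one hpos).2 (by linarith)⟩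
    refine .inr (.inl ⟨⟨_, hs⟩, ?_, IccExtend_of_mem _ _ hs⟩)
    rw [Subtype.dist_eq, Real.dist_eq, abs_le, le_sub_iff_add_le, sub_le_iff_le_add,
      le_div_iff₀ hpos, div_le_iff₀ hpos]
    constructor <;> nlinarith [t.2.1, t.2.2]
  · exact .inr (.inr ⟨not_le.1 h₁, IccExtend_range _ q ▸ mem_range_self _⟩)

end concatWithEnds

def mapsNear (Y : Type*) [TopologicalSpace Y] (x : X) : Filter C(Y, X) :=
  comap (fun f => range f) (𝓝 x).smallSets

theorem hasBasis_mapsNear (Y : Type*) [TopologicalSpace Y] (x : X) :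
    (mapsNear Y x).HasBasis (· ∈ 𝓝 x) fun N => {f | range f ⊆ N} :=
  (𝓝 x).basis_sets.smallSets.comap _

theorem eventually_mapsNear_range_subset (Y : Type*) [TopologicalSpace Y] {x : X} {O : Set X}
    (hO : IsOpen O) : ∀ᶠ f : C(Y, X) in mapsNear Y x, x ∈ O → range f ⊆ O := by
  by_cases hx : x ∈ O
  · filter_upwards [(hasBasis_mapsNear Y x).mem_of_mem (hO.mem_nhds hx)] with f hf using
      fun _ => hf
  · exact .of_forall fun _ h => absurd h hx

theorem ContinuousMap.eventually_mem_of_eventually_mapsTo {Y ι : Type*} [TopologicalSpace Y]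
    {f : C(Y, X)} {l : Filter ι} {g : ι → Y → X}
    (h : ∀ K, IsCompact K → ∀ O, IsOpen O → MapsTo f K O → ∀ᶠ i in l, MapsTo (g i) K O)
    {U : Set C(Y, X)} (hU : U ∈ 𝓝 f) : ∀ᶠ i in l, ∀ f' : C(Y, X), ⇑f' = g i → f' ∈ U := by
  have hle : comap (⇑) (map g l) ≤ 𝓝 f := by
    rw [nhds_compactOpen]
    exact le_iInf₂ fun K hK => le_iInf₂ fun O hO => le_iInf fun hf =>
      le_principal_iff.2 <|
        preimage_mem_comap (t := {g' : Y → X | MapsTo g' K O}) (h K hK O hO hf)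
  exact mem_comap'.1 (hle hU)

theorem eventually_mapsTo_concatWithEnds (γ : C(I, X)) {K : Set I} (hK : IsCompact K)
    {O : Set X} (hO : IsOpen O) (hγ : MapsTo γ K O) :
    ∀ᶠ x in 𝓝[>] 0 ×ˢ (mapsNear I (γ 0) ×ˢ mapsNear I (γ 1)),
      MapsTo (fun t : I => concatWithEnds x.1 x.2.1 γ x.2.2 t) K O := by
  obtain ⟨δ, hδ, hthick⟩ := hK.exists_thickening_subset_open (hO.preimage γ.continuous) hγ
  have hε : ∀ᶠ ε in 𝓝[>] (0 : ℝ), 0 < ε ∧ ε < δ / 2 ∧ ε ≤ 1 / 4 := by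
    filter_upwards [Ioo_mem_nhdsGT (by positivity : (0 : ℝ) < min (δ / 2) (1 / 4))]
      with ε ⟨hε₀, hε⟩
    exact ⟨hε₀, hε.trans_le (min_le_left _ _), (hε.trans_le (min_le_right _ _)).le⟩
  filter_upwards [hε.prod_mk ((eventually_mapsNear_range_subset I hO).prod_mk
    (eventually_mapsNear_range_subset I hO))]
  rintro ⟨ε, p, q⟩ ⟨⟨hε₀, hεδ, hε₁⟩, hp, hq⟩ t ht
  change concatWithEnds ε p γ q t ∈ O
  have hγ_near (s : I) (hs : dist s t < δ) : γ s ∈ O :=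
    hthick (Metric.mem_thickening_iff.2 ⟨t, ht, hs⟩)
  rcases concatWithEnds_cases p γ q hε₀ hε₁ t with ⟨htε, hv⟩ | ⟨s, hs, hv⟩ | ⟨htε, hv⟩
  · refine hp (hγ_near 0 ?_) hv
    simp only [Subtype.dist_eq, Icc.coe_zero, Real.dist_eq, abs_sub_lt_iff]
    constructor <;> linarith [t.2.1]
  · exact hv ▸ hγ_near s (by linarith)
  · refine hq (hγ_near 1 ?_) hv
    simp only [Subtype.dist_eq, Icc.coe_one, Real.dist_eq, abs_sub_lt_iff]
    constructor <;> linarith [t.2.2]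

end

/-- If `X` is locally path connected at both endpoints of a path `α`, then `α` is
well-ended. -/
theorem isWellEnded_of_locallyPathConnectedAt {X : Type*} [TopologicalSpace X] (α : C(I, X))
    (h0 : LocallyPathConnectedAt (α 0)) (h1 : LocallyPathConnectedAt (α 1)) :
    IsWellEnded α := by
  intro U hU hαU
  have hbasis := (nhdsGT_basis (0 : ℝ)).prod
    ((hasBasis_mapsNear I (α 0)).prod (hasBasis_mapsNear I (α 1)))
  obtain ⟨⟨e, N₀, N₁⟩, ⟨he, hN₀, hN₁⟩, hconcat⟩ := hbasis.eventually_iff.1 <|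
    ContinuousMap.eventually_mem_of_eventually_mapsTo
      (fun _ hK _ hO hα => eventually_mapsTo_concatWithEnds α hK hO hα) (hU.mem_nhds hαU)
  obtain ⟨V₀, hV₀N, hV₀, hαV₀, hV₀pc⟩ := h0 _ isOpen_interior (mem_interior_iff_mem_nhds.2 hN₀)
  obtain ⟨V₁, hV₁N, hV₁, hαV₁, hV₁pc⟩ := h1 _ isOpen_interior (mem_interior_iff_mem_nhds.2 hN₁)
  refine ⟨V₀, V₁, hV₀, hV₁, hαV₀, hαV₁, fun a ha b hb => ?_⟩
  obtain ⟨p, hp⟩ := hV₀pc.joinedIn a ha (α 0) hαV₀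
  obtain ⟨q, hq⟩ := hV₁pc.joinedIn (α 1) hαV₁ b hb
  set ε := min (e / 2) (1 / 4)
  have hε : ε ∈ Ioo 0 e := ⟨by positivity, (min_le_left _ _).trans_lt (half_lt_self he)⟩
  have hε' : ε < 1 / 2 := (min_le_right _ _).trans_lt (by norm_num)
  refine ⟨⟨fun t => concatWithEnds ε p α q t,
    (continuous_concatWithEnds p α q hε.1 hε' p.target q.source.symm).comp continuous_subtype_val⟩,
    hconcat (x := (ε, p, q)) ⟨hε, ?_, ?_⟩ _ rfl,
    (concatWithEnds_zero p α q hε.1).trans p.source,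
    (concatWithEnds_one p α q hε.1 hε').trans q.target⟩
  · rintro _ ⟨t, rfl⟩
    exact interior_subset (hV₀N (hp t))
  · rintro _ ⟨t, rfl⟩
    exact interior_subset (hV₁N (hq t))
end

section
/- The reverse of a well-ended path is well-ended, and the concatenation of two well-ended paths (whenever composable) is well-ended. -/
open unitInterval Topology

/-- The reverse of a path: `α⁻¹(t) = α(1 − t)`. -/
def reverseCM {X : Type*} [TopologicalSpace X] (α : C(I, X)) : C(I, X) :=
  α.comp ⟨unitInterval.symm, unitInterval.continuous_symm⟩

/-- Concatenation of two paths `α, β : I → X` with `α 1 = β 0`. -/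
noncomputable def concatCM {X : Type*} [TopologicalSpace X] (α β : C(I, X)) (h : α 1 = β 0) :
    C(I, X) :=
  ((⟨α, rfl, rfl⟩ : Path (α 0) (α 1)).trans
    ((⟨β, rfl, rfl⟩ : Path (β 0) (β 1)).cast h rfl)).toContinuousMap

/-!
Reversal is a continuous self-map of `C(I, X)` swapping the endpoints, so it transports the defining
neighbourhoods. For `α * β`, continuity of concatenation on composable pairs yields neighbourhoods
`Wα ∋ α`, `Wβ ∋ β` whose composable concatenations lie in `U`; well-endedness of `α` joins any `a`
near `α 0` to `α 1` inside `Wα`, and that of `β` joins `β 0 = α 1` to any `b` near `β 1` inside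
`Wβ`, and the two connecting paths concatenate into `U`.
-/

section Paths

variable {X : Type*} [TopologicalSpace X]

@[simp]
lemma reverseCM_apply_zero (α : C(I, X)) : reverseCM α 0 = α 1 := by
  simp [reverseCM]

@[simp]
lemma reverseCM_apply_one (α : C(I, X)) : reverseCM α 1 = α 0 := by
  simp [reverseCM]

lemma continuous_reverseCM : Continuous (reverseCM : C(I, X) → C(I, X)) :=
  ContinuousMap.continuous_precomp _

@[simp]
lemma concatCM_apply_zero (α β : C(I, X)) (h : α 1 = β 0) : concatCM α β h 0 = α 0 :=
  Path.source _

@[simp]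
lemma concatCM_apply_one (α β : C(I, X)) (h : α 1 = β 0) : concatCM α β h 1 = β 1 :=
  Path.target _

lemma continuous_concatCM :
    Continuous fun p : {p : C(I, X) × C(I, X) // p.1 1 = p.2 0} => concatCM p.1.1 p.1.2 p.2 := by
  apply ContinuousMap.continuous_of_continuous_uncurry
  exact Path.trans_continuous_family
    (fun p : {p : C(I, X) × C(I, X) // p.1 1 = p.2 0} =>
      (⟨p.1.1, rfl, rfl⟩ : Path (p.1.1 0) (p.1.1 1)))
    (ContinuousEval.continuous_eval.comp
      ((continuous_fst.comp continuous_subtype_val).prodMap continuous_id))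
    (fun p => ((⟨p.1.2, rfl, rfl⟩ : Path (p.1.2 0) (p.1.2 1)).cast p.2 rfl))
    (ContinuousEval.continuous_eval.comp
      ((continuous_snd.comp continuous_subtype_val).prodMap continuous_id))

lemma exists_open_nhds_concatCM_mem {α β : C(I, X)} (h : α 1 = β 0) {U : Set C(I, X)}
    (hU : IsOpen U) (hαβ : concatCM α β h ∈ U) :
    ∃ Wα Wβ : Set C(I, X), IsOpen Wα ∧ IsOpen Wβ ∧ α ∈ Wα ∧ β ∈ Wβ ∧
      ∀ α' ∈ Wα, ∀ β' ∈ Wβ, ∀ h' : α' 1 = β' 0, concatCM α' β' h' ∈ U := by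
  obtain ⟨W, hW, hWU⟩ := isOpen_induced_iff.mp (hU.preimage continuous_concatCM)
  have hmem_iff (p : {p : C(I, X) × C(I, X) // p.1 1 = p.2 0}) :
      p.1 ∈ W ↔ concatCM p.1.1 p.1.2 p.2 ∈ U :=
    Set.ext_iff.mp hWU p
  obtain ⟨Wα, Wβ, hWα, hWβ, hα, hβ, hsub⟩ :=
    isOpen_prod_iff.mp hW α β ((hmem_iff ⟨(α, β), h⟩).2 hαβ)
  exact ⟨Wα, Wβ, hWα, hWβ, hα, hβ, fun α' hα' β' hβ' h' =>
    (hmem_iff ⟨(α', β'), h'⟩).1 (hsub (Set.mk_mem_prod hα' hβ'))⟩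

lemma IsWellEnded.reverseCM {α : C(I, X)} (hα : IsWellEnded α) : IsWellEnded (reverseCM α) := by
  intro U hU hαU
  obtain ⟨V₀, V₁, hV₀, hV₁, h₀, h₁, hjoin⟩ :=
    hα (_root_.reverseCM ⁻¹' U) (hU.preimage continuous_reverseCM) hαU
  refine ⟨V₁, V₀, hV₁, hV₀, by simpa, by simpa, fun a ha b hb => ?_⟩
  obtain ⟨γ, hγU, hγ₀, hγ₁⟩ := hjoin b hb a ha
  exact ⟨_root_.reverseCM γ, hγU, by simpa, by simpa⟩

lemma IsWellEnded.concatCM {α β : C(I, X)} (hα : IsWellEnded α) (hβ : IsWellEnded β)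
    (h : α 1 = β 0) : IsWellEnded (concatCM α β h) := by
  intro U hU hαβU
  obtain ⟨Wα, Wβ, hWα, hWβ, hαW, hβW, hconcat⟩ := exists_open_nhds_concatCM_mem h hU hαβU
  obtain ⟨V₀, Vα, hV₀, -, hα₀, hα₁, hjoinα⟩ := hα Wα hWα hαW
  obtain ⟨Vβ, V₁, -, hV₁, hβ₀, hβ₁, hjoinβ⟩ := hβ Wβ hWβ hβW
  refine ⟨V₀, V₁, hV₀, hV₁, by simpa, by simpa, fun a ha b hb => ?_⟩
  obtain ⟨α', hα'W, hα'₀, hα'₁⟩ := hjoinα a ha (α 1) hα₁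
  obtain ⟨β', hβ'W, hβ'₀, hβ'₁⟩ := hjoinβ (β 0) hβ₀ b hb
  have h' : α' 1 = β' 0 := by rw [hα'₁, hβ'₀, h]
  exact ⟨_, hconcat α' hα'W β' hβ'W h', by simpa, by simpa⟩

end Paths

/-- The reverse of a well-ended path is well-ended, and the concatenation of two
well-ended (composable) paths is well-ended. -/
theorem isWellEnded_reverse_and_concat {X : Type*} [TopologicalSpace X] :
    (∀ α : C(I, X), IsWellEnded α → IsWellEnded (reverseCM α)) ∧
    (∀ (α β : C(I, X)) (h : α 1 = β 0), IsWellEnded α → IsWellEnded β →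
      IsWellEnded (concatCM α β h)) :=
  ⟨fun _ hα => hα.reverseCM, fun _ _ h hα hβ => hα.concatCM hβ h⟩
end

section
/- If α : I → X is a path and there exists t ∈ [0,1] such that the restricted path α_{[t,1]} (the restriction of α to [t,1] reparametrized linearly to I) is well-targeted, then α is well-targeted. -/
open unitInterval Topology

/-- The restriction `α_{[t,1]}` of a path `α` to `[t,1]`, reparametrized linearly to `I`
(`s ↦ α (t + s(1−t))`; for `t = 1` it is the constant path at `α 1`). -/
def restrictCM {X : Type*} [TopologicalSpace X] (α : C(I, X)) (t : I) : C(I, X) :=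
  α.comp
    ⟨fun s => ⟨(t : ℝ) + s * (1 - t),
      ⟨add_nonneg t.2.1 (mul_nonneg s.2.1 (by linarith [t.2.2])),
        by nlinarith [s.2.2, t.2.2, s.2.1, t.2.1]⟩⟩,
      by fun_prop⟩

/-!
For `t < 1`, prefixing `α` on `[0, t]` to the paths that start at `α t` is a continuous map of
path spaces which keeps endpoints and sends `α_{[t,1]}` back to `α`, so it transports
well-targetedness. For `t = 1` the restriction is constant; then `α` is a limit of
reparametrizations `α ∘ φ u` that are constant at `α 1` on a final interval `[c, 1]` with
`c < 1`, hence well-targeted by the first case, and well-targetedness passes to limits of paths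
with the same endpoints.
-/

open Set

section

variable {X : Type*} [TopologicalSpace X]

theorem isWellTargeted_iff (α : C(I, X)) :
    IsWellTargeted α ↔ ∀ U : Set C(I, X), IsOpen U → α ∈ U →
      ∃ V : Set X, IsOpen V ∧ α 1 ∈ V ∧ ∀ b ∈ V, ∃ β ∈ U, β 0 = α 0 ∧ β 1 = b := by
  constructor
  · intro h U hU hα
    obtain ⟨V, hV, hαV, hreach⟩ :=
      h (Subtype.val ⁻¹' U) (hU.preimage continuous_subtype_val) hα
    refine ⟨V, hV, hαV, fun b hb => ?_⟩
    obtain ⟨β, hβU, hβb⟩ := hreach b hb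
    exact ⟨β.1, hβU, β.2, hβb⟩
  · intro h U hU hα
    obtain ⟨U', hU', rfl⟩ := isOpen_induced_iff.1 hU
    obtain ⟨V, hV, hαV, hreach⟩ := h U' hU' hα
    refine ⟨V, hV, hαV, fun b hb => ?_⟩
    obtain ⟨β, hβU, hβ0, hβb⟩ := hreach b hb
    exact ⟨⟨β, hβ0⟩, hβU, hβb⟩

theorem IsWellTargeted.of_mem_closure {α : C(I, X)}
    (h : α ∈ closure {γ : C(I, X) | γ 0 = α 0 ∧ γ 1 = α 1 ∧ IsWellTargeted γ}) :
    IsWellTargeted α := by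
  rw [isWellTargeted_iff]
  intro U hU hα
  obtain ⟨γ, hγU, hγ0, hγ1, hγ⟩ := mem_closure_iff.1 h U hU hα
  obtain ⟨V, hV, hγV, hreach⟩ := (isWellTargeted_iff γ).1 hγ U hU hγU
  refine ⟨V, hV, hγ1 ▸ hγV, fun b hb => ?_⟩
  obtain ⟨β, hβU, hβ0, hβb⟩ := hreach b hb
  exact ⟨β, hβU, hβ0.trans hγ0, hβb⟩

theorem IsWellTargeted.of_continuous_map {δ α : C(I, X)} (hδ : IsWellTargeted δ)
    (F : C({β : C(I, X) // β 0 = δ 0}, C(I, X))) (hFδ : F ⟨δ, rfl⟩ = α)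
    (hF0 : ∀ β, F β 0 = α 0) (hF1 : ∀ β, F β 1 = β.1 1) : IsWellTargeted α := by
  rw [isWellTargeted_iff]
  intro U hU hα
  obtain ⟨V, hV, hδV, hreach⟩ :=
    hδ (F ⁻¹' U) (hU.preimage F.continuous) (by rwa [mem_preimage, hFδ])
  refine ⟨V, hV, by rwa [← hFδ, hF1], fun b hb => ?_⟩
  obtain ⟨β, hβU, rfl⟩ := hreach b hb
  exact ⟨F β, hβU, hF0 β, hF1 β⟩

theorem restrictCM_apply_of_eq {α : C(I, X)} {t s u : I} (h : (u : ℝ) = t + s * (1 - t)) :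
    restrictCM α t s = α u := by
  change α _ = α u
  exact congrArg α (Subtype.ext h.symm)

theorem restrictCM_apply_zero (α : C(I, X)) (t : I) : restrictCM α t 0 = α t :=
  restrictCM_apply_of_eq (by simp)

theorem restrictCM_eq_const {α : C(I, X)} {t : I} {x : X} (h : ∀ s, t ≤ s → α s = x) :
    restrictCM α t = ContinuousMap.const I x := by
  ext s
  have hts : (t : ℝ) ≤ t + s * (1 - t) :=
    le_add_of_nonneg_right (mul_nonneg s.2.1 (sub_nonneg.2 t.2.2))
  change α _ = x
  exact h _ hts

theorem restrictCM_one (α : C(I, X)) : restrictCM α 1 = ContinuousMap.const I (α 1) :=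
  restrictCM_eq_const fun s hs => congrArg α (le_antisymm (le_one s) hs)

section Splice

variable (γ : C(I, X)) (c : I)

/-- `γ` on `[0, c]` followed by `β` reparametrized linearly onto `[c, 1]`. -/
noncomputable def spliceFun (p : C(I, X) × I) : X :=
  if (p.2 : ℝ) ≤ c then γ p.2 else p.1 (projIcc 0 1 zero_le_one ((p.2 - c) / (1 - c)))

theorem continuous_spliceFun {x : X} (hx : γ c = x) :
    Continuous fun p : {β : C(I, X) // β 0 = x} × I => spliceFun γ c (p.1.1, p.2) := by
  refine Continuous.if_le (by fun_prop) ?_ (by fun_prop) (by fun_prop) ?_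
  · exact (continuous_subtype_val.comp continuous_fst).eval
      ((continuous_projIcc (h := zero_le_one)).comp (by fun_prop))
  · rintro ⟨β, s⟩ (hs : (s : ℝ) = c)
    have hs' : s = c := Subtype.ext hs
    simp only [hs, sub_self, zero_div]
    rw [projIcc_left, hs', hx]
    exact β.2.symm

noncomputable def splice {x : X} (hx : γ c = x) : C({β : C(I, X) // β 0 = x}, C(I, X)) :=
  ContinuousMap.curry ⟨_, continuous_spliceFun γ c hx⟩

variable {γ c} {x : X} (hx : γ c = x)

theorem splice_apply_zero (β) : splice γ c hx β 0 = γ 0 :=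
  if_pos c.2.1

theorem splice_apply_one (hc : c < 1) (β) : splice γ c hx β 1 = β.1 1 := by
  have hc' : (c : ℝ) < 1 := hc
  change (if ((1 : I) : ℝ) ≤ c then _ else _) = _
  rw [if_neg (by simpa using hc'), Icc.coe_one, div_self (by linarith), projIcc_right]
  rfl

theorem splice_restrictCM (hc : c < 1) :
    splice γ c (restrictCM_apply_zero γ c).symm ⟨restrictCM γ c, rfl⟩ = γ := by
  have hc' : (1 : ℝ) - c ≠ 0 := by have : (c : ℝ) < 1 := hc; linarith
  ext s
  change (if (s : ℝ) ≤ c then _ else _) = _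
  split_ifs with hs
  · rfl
  · have hmem : ((s : ℝ) - c) / (1 - c) ∈ Icc (0 : ℝ) 1 := by
      have : (s : ℝ) ≤ 1 := s.2.2
      constructor
      · exact div_nonneg (by linarith) (by linarith)
      · rw [div_le_one (by linarith)]; linarith
    refine restrictCM_apply_of_eq ?_
    rw [projIcc_of_mem _ hmem, div_mul_cancel₀ _ hc']
    ring

end Splice

theorem IsWellTargeted.of_restrictCM_of_lt_one {α : C(I, X)} {t : I} (ht : t < 1)
    (h : IsWellTargeted (restrictCM α t)) : IsWellTargeted α :=
  h.of_continuous_map (splice α t (restrictCM_apply_zero α t).symm)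
    (splice_restrictCM ht) (splice_apply_zero _) (splice_apply_one _ ht)

/-- `u ↦ α ∘ φ u`, where `φ u` runs through `[0,1]` on `[0, (1 + u) / 2]` and then stays at `1`;
`φ 1` is the identity. -/
def reparamHomotopy (α : C(I, X)) : C(I, C(I, X)) :=
  ContinuousMap.curry <| α.comp
    ⟨fun p : I × I => ⟨min (max (p.2 : ℝ) (2 * p.2 - p.1)) 1,
        le_min (le_max_of_le_left p.2.2.1) zero_le_one, min_le_right _ _⟩,
      by fun_prop⟩

theorem reparamHomotopy_apply_of_eq {α : C(I, X)} {u s v : I}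
    (h : min (max (s : ℝ) (2 * s - u)) 1 = v) : reparamHomotopy α u s = α v :=
  congrArg α (Subtype.ext h)

theorem reparamHomotopy_apply_one (α : C(I, X)) : reparamHomotopy α 1 = α := by
  ext s
  refine reparamHomotopy_apply_of_eq ?_
  have : (s : ℝ) ≤ 1 := s.2.2
  rw [max_eq_left (by simp only [Icc.coe_one]; linarith), min_eq_left this]

theorem IsWellTargeted.of_restrictCM_one {α : C(I, X)} (h : IsWellTargeted (restrictCM α 1)) :
    IsWellTargeted α := by
  have h1 : (1 : I) ∈ closure (Iio (1 : I)) := by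
    rw [closure_Iio' (a := (1 : I)) ⟨0, zero_lt_one⟩]
    exact mem_Iic.2 le_rfl
  suffices hmaps : MapsTo (reparamHomotopy α) (Iio 1)
      {γ : C(I, X) | γ 0 = α 0 ∧ γ 1 = α 1 ∧ IsWellTargeted γ} by
    have hα := map_mem_closure (reparamHomotopy α).continuous h1 hmaps
    rw [reparamHomotopy_apply_one] at hα
    exact .of_mem_closure hα
  intro u (hu : (u : ℝ) < 1)
  have hu0 : (0 : ℝ) ≤ u := u.2.1
  refine ⟨reparamHomotopy_apply_of_eq ?_, reparamHomotopy_apply_of_eq ?_, ?_⟩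
  · simp only [Icc.coe_zero]
    rw [max_eq_left (by linarith), min_eq_left zero_le_one]
  · simp only [Icc.coe_one]
    rw [max_eq_right (by linarith), min_eq_right (by linarith)]
  · set c : I := ⟨(1 + u) / 2, by linarith, by linarith⟩
    have hc : c < 1 := show (1 + u) / 2 < (1 : ℝ) by linarith
    have hconst (s : I) (hs : c ≤ s) : reparamHomotopy α u s = α 1 := by
      have : (1 + u) / 2 ≤ (s : ℝ) := hs
      exact reparamHomotopy_apply_of_eq (min_eq_right (le_max_of_le_right (by linarith)))
    refine IsWellTargeted.of_restrictCM_of_lt_one hc ?_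
    rwa [restrictCM_eq_const hconst, ← restrictCM_one]

end

/-- If some terminal restriction `α_{[t,1]}` of a path `α` is well-targeted, then `α` is
well-targeted. -/
theorem isWellTargeted_of_restrict {X : Type*} [TopologicalSpace X] (α : C(I, X)) (t : I)
    (h : IsWellTargeted (restrictCM α t)) : IsWellTargeted α := by
  rcases (le_one' (t := t)).lt_or_eq with ht | rfl
  · exact h.of_restrictCM_of_lt_one ht
  · exact h.of_restrictCM_one
end
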